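/- Equivalence of the multiplex LTM and the multiplex LEM: for every multiplex network w on n agents with m layers, every seed set S₀ ⊆ Fin n, every protocol assignment u, and every agent i, the probability (over thresholds μ distributed according to the product of uniform measures on [0,1]) that i belongs to the steady-state active set S n of the multiplex LTM equals the probability (over live-edge selections σ distributed according to the product PMF with ℙ(σ i k = j) = w k i j) that i is U-reachable from S₀ under σ; that is, ℙ_LTM(i) = r(i). -/

import Mathlib

open MeasureTheory

inductive Protocol
  | OR
  | AND
deriving DecidableEq

noncomputable def ltmStep {n m : ℕ} (w : Fin m → Fin n → Fin n → ℝ)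
    (u : Fin n → Protocol) (μ : Fin n → Fin m → ℝ)
    (A : Finset (Fin n)) : Finset (Fin n) :=
  A ∪ Finset.univ.filter fun i =>
    (u i = Protocol.OR ∧ ∃ k, μ i k < ∑ j ∈ A, w k i j) ∨
    (u i = Protocol.AND ∧ ∀ k, μ i k < ∑ j ∈ A, w k i j)

noncomputable def ltmSS {n m : ℕ} (w : Fin m → Fin n → Fin n → ℝ)
    (u : Fin n → Protocol) (S₀ : Finset (Fin n))
    (μ : Fin n → Fin m → ℝ) : Finset (Fin n) :=
  (ltmStep w u μ)^[n] S₀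

noncomputable def thMeasure (n m : ℕ) : Measure (Fin n → Fin m → ℝ) :=
  Measure.pi fun _ => Measure.pi fun _ => volume.restrict (Set.Icc (0:ℝ) 1)

noncomputable def pLTM {n m : ℕ} (w : Fin m → Fin n → Fin n → ℝ)
    (u : Fin n → Protocol) (S₀ : Finset (Fin n)) (i : Fin n) : ℝ :=
  (thMeasure n m {μ | i ∈ ltmSS w u S₀ μ}).toReal

def lemStep {n m : ℕ} (S₀ : Finset (Fin n)) (u : Fin n → Protocol)
    (σ : Fin n → Fin m → Fin n) (A : Finset (Fin n)) : Finset (Fin n) :=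
  S₀ ∪ A ∪ Finset.univ.filter fun i =>
    (u i = Protocol.OR ∧ ∃ k, σ i k ∈ A) ∨
    (u i = Protocol.AND ∧ ∀ k, σ i k ∈ A)

def UReachable {n m : ℕ} (S₀ : Finset (Fin n)) (u : Fin n → Protocol)
    (σ : Fin n → Fin m → Fin n) (i : Fin n) : Prop :=
  i ∈ (lemStep S₀ u σ)^[n] S₀

instance {n m : ℕ} (S₀ : Finset (Fin n)) (u : Fin n → Protocol)
    (σ : Fin n → Fin m → Fin n) (i : Fin n) : Decidable (UReachable S₀ u σ i) := by
  unfold UReachable; infer_instance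

noncomputable def rProb {n m : ℕ} (w : Fin m → Fin n → Fin n → ℝ)
    (S₀ : Finset (Fin n)) (u : Fin n → Protocol) (i : Fin n) : ℝ :=
  ∑ σ : Fin n → Fin m → Fin n,
    if UReachable S₀ u σ i then ∏ a : Fin n, ∏ k : Fin m, w k a (σ a k) else 0

noncomputable def casCen {n m : ℕ} (w : Fin m → Fin n → Fin n → ℝ)
    (u : Fin n → Protocol) (j : Fin n) : ℝ :=
  ∑ i : Fin n, pLTM w u {j} i

noncomputable def pathW (N : ℕ) (i j : Fin N) : ℝ :=
  if j.val = i.val + 1 ∨ i.val = j.val + 1 then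
    (if i.val = 0 ∨ i.val = N - 1 then 1 else 1/2)
  else 0

noncomputable def cycleW (N : ℕ) (i j : Fin N) : ℝ :=
  if (i.val + 1) % N = j.val ∨ (j.val + 1) % N = i.val then 1/2 else 0

noncomputable def permW2 (N : ℕ) (i j : Fin N) : ℝ :=
  if ((i.val + 1) % N = j.val ∨ (j.val + 1) % N = i.val) ∧
      ¬((i.val = N - 2 ∧ j.val = N - 1) ∨ (i.val = N - 1 ∧ j.val = N - 2)) then
    (if i.val = N - 2 ∨ i.val = N - 1 then 1 else 1/2)
  else 0

/-!
Both models are cascades of the same shape: agent `a` joins in the round after its private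
randomness `x a` falls into an up-set `E a S` of the currently active set `S`, and the `x a` are
independent. Fix a candidate trajectory `T`. The event that the cascade follows `T` is a product
over the agents, and the factor of agent `a` only depends on which of the increasing events
`E a (T 0) ⊆ E a (T 1) ⊆ ⋯` contain `x a`, that is, on the index of the first one that does. The
law of that index is determined by the probabilities of the events `E a (T t)`, and these agree
in the two models: layer `k` is triggered by `S` with probability `∑ j ∈ S, w k a j` both for a
threshold uniform on `[0, 1]` and for a live edge with `ℙ(σ a k = j) = w k a j`, and OR / AND
combine the independent layers in the same way.
-/

open Set

theorem fin_iterate_eq_iff {α : Type*} (f : α → α) (a : α) {N : ℕ} (T : Fin (N + 1) → α) :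
    (fun t : Fin (N + 1) => f^[t] a) = T ↔ T 0 = a ∧ ∀ t : Fin N, f (T t.castSucc) = T t.succ := by
  constructor
  · rintro rfl
    refine ⟨rfl, fun t => ?_⟩
    simp only [Fin.val_succ, Fin.val_castSucc, Function.iterate_succ_apply']
  · rintro ⟨h0, hstep⟩
    funext t
    induction t using Fin.induction with
    | zero => exact h0.symm
    | succ t ih => rw [Fin.val_succ, Function.iterate_succ_apply', ← hstep, ← ih, Fin.val_castSucc]

theorem iterate_sup_left_eq {α : Type*} [SemilatticeSup α] {f : α → α} (hf : id ≤ f)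
    (s : α) (k : ℕ) : (fun a => s ⊔ f a)^[k] s = f^[k] s := by
  induction k with
  | zero => rfl
  | succ k ih =>
    rw [Function.iterate_succ_apply', Function.iterate_succ_apply', ih]
    exact sup_eq_right.2 <| (Function.id_le_iterate_of_id_le hf k s).trans (hf _)

section Chain
variable {Y Y' : Type*} {N : ℕ}

open Classical in
/-- For an increasing chain `F`, the index of the first `F t` containing `y` (`N` if none does). -/
noncomputable def chainIndex (F : Fin N → Set Y) (y : Y) : ℕ :=
  (Finset.univ.filter fun t => y ∉ F t).card

theorem chainIndex_le_iff {F : Fin N → Set Y} (hF : Monotone F) (y : Y) (t : Fin N) :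
    chainIndex F y ≤ t ↔ y ∈ F t := by
  classical
  constructor
  · intro h
    by_contra hy
    have : Finset.Iic t ⊆ Finset.univ.filter fun s => y ∉ F s := fun s hs =>
      Finset.mem_filter.2 ⟨Finset.mem_univ s, fun h' => hy (hF (Finset.mem_Iic.1 hs) h')⟩
    have := Finset.card_le_card this
    rw [Fin.card_Iic] at this
    unfold chainIndex at h
    omega
  · intro hy
    have : (Finset.univ.filter fun s => y ∉ F s) ⊆ Finset.Iio t := fun s hs =>
      Finset.mem_Iio.2 (lt_of_not_ge fun hts => (Finset.mem_filter.1 hs).2 (hF hts hy))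
    simpa [chainIndex, Fin.card_Iio] using Finset.card_le_card this

theorem chainIndex_le (F : Fin N → Set Y) (y : Y) : chainIndex F y ≤ N := by
  classical
  exact (Finset.card_filter_le _ _).trans_eq (Finset.card_fin N)

theorem chainIndex_preimage_Iic {F : Fin N → Set Y} (hF : Monotone F) (s : ℕ) :
    chainIndex F ⁻¹' Iic s = if h : s < N then F ⟨s, h⟩ else univ := by
  split_ifs with h
  · ext y; exact chainIndex_le_iff hF y ⟨s, h⟩
  · ext y; simpa using (chainIndex_le F y).trans (not_lt.1 h)

theorem setOf_chain_pattern_eq_preimage {F : Fin N → Set Y} (hF : Monotone F)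
    (p : (Fin N → Prop) → Prop) :
    {y | p fun t => y ∈ F t} = chainIndex F ⁻¹' {s | p fun t => s ≤ t} := by
  ext y
  simp only [mem_preimage, mem_ofPred_eq, chainIndex_le_iff hF]

variable [MeasurableSpace Y] [MeasurableSpace Y']

theorem measurable_chainIndex {F : Fin N → Set Y} (hF : Monotone F)
    (hFm : ∀ t, MeasurableSet (F t)) : Measurable (chainIndex F) := by
  refine measurable_of_Iic fun s => ?_
  rw [chainIndex_preimage_Iic hF]
  split_ifs
  exacts [hFm _, MeasurableSet.univ]

theorem measurableSet_setOf_chain_pattern {F : Fin N → Set Y} (hF : Monotone F)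
    (hFm : ∀ t, MeasurableSet (F t)) (p : (Fin N → Prop) → Prop) :
    MeasurableSet {y | p fun t => y ∈ F t} := by
  rw [setOf_chain_pattern_eq_preimage hF]
  exact measurable_chainIndex hF hFm .of_discrete

theorem measure_setOf_chain_pattern_eq
    {ν : Measure Y} {ν' : Measure Y'} [IsProbabilityMeasure ν] [IsProbabilityMeasure ν']
    {F : Fin N → Set Y} {F' : Fin N → Set Y'} (hF : Monotone F) (hF' : Monotone F')
    (hFm : ∀ t, MeasurableSet (F t)) (hFm' : ∀ t, MeasurableSet (F' t))
    (h : ∀ t, ν (F t) = ν' (F' t)) (p : (Fin N → Prop) → Prop) :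
    ν {y | p fun t => y ∈ F t} = ν' {y | p fun t => y ∈ F' t} := by
  have hτ := measurable_chainIndex hF hFm
  have hτ' := measurable_chainIndex hF' hFm'
  have hlaw : ν.map (chainIndex F) = ν'.map (chainIndex F') := by
    refine Measure.ext_of_Iic _ _ fun s => ?_
    rw [Measure.map_apply hτ measurableSet_Iic, Measure.map_apply hτ' measurableSet_Iic,
      chainIndex_preimage_Iic hF, chainIndex_preimage_Iic hF']
    split_ifs
    exacts [h _, by simp]
  rw [setOf_chain_pattern_eq_preimage hF, setOf_chain_pattern_eq_preimage hF',
    ← Measure.map_apply hτ .of_discrete, ← Measure.map_apply hτ' .of_discrete, hlaw]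

end Chain

section Cascade
variable {ι : Type*} [Fintype ι] {X : ι → Type*}

open Classical in
noncomputable def cascadeStep (E : ∀ a, Finset ι → Set (X a)) (x : ∀ a, X a) (A : Finset ι) :
    Finset ι :=
  A ∪ Finset.univ.filter fun a => x a ∈ E a A

noncomputable def cascadeTrajectory (E : ∀ a, Finset ι → Set (X a)) (S₀ : Finset ι) (N : ℕ)
    (x : ∀ a, X a) : Fin (N + 1) → Finset ι :=
  fun t => (cascadeStep E x)^[t] S₀

variable {E : ∀ a, Finset ι → Set (X a)} {S₀ : Finset ι} {N : ℕ}

theorem mem_cascadeStep {x : ∀ a, X a} {A : Finset ι} {a : ι} :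
    a ∈ cascadeStep E x A ↔ a ∈ A ∨ x a ∈ E a A := by
  classical
  simp [cascadeStep]

theorem monotone_cascadeTrajectory (x : ∀ a, X a) : Monotone (cascadeTrajectory E S₀ N x) := by
  refine Fin.monotone_iff_le_succ.2 fun t => ?_
  simp only [cascadeTrajectory, Fin.val_succ, Fin.val_castSucc, Function.iterate_succ_apply']
  exact fun a ha => mem_cascadeStep.2 (.inl ha)

theorem setOf_cascadeTrajectory_eq {T : Fin (N + 1) → Finset ι} (hT0 : T 0 = S₀) :
    {x | cascadeTrajectory E S₀ N x = T} = univ.pi fun a =>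
      {y | ∀ t : Fin N, a ∈ T t.succ ↔ a ∈ T t.castSucc ∨ y ∈ E a (T t.castSucc)} := by
  ext x
  simp only [mem_ofPred_eq, mem_univ_pi]
  unfold cascadeTrajectory
  rw [fin_iterate_eq_iff]
  simp only [hT0, true_and, Finset.ext_iff, mem_cascadeStep]
  rw [forall_comm]
  simp only [iff_comm]

theorem setOf_cascadeTrajectory_eq_empty {T : Fin (N + 1) → Finset ι}
    (hT : ¬ (Monotone T ∧ T 0 = S₀)) : {x | cascadeTrajectory E S₀ N x = T} = ∅ := by
  refine eq_empty_of_forall_notMem ?_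
  rintro x rfl
  exact hT ⟨monotone_cascadeTrajectory x, by simp [cascadeTrajectory]⟩

open Classical in
theorem setOf_mem_iterate_cascadeStep (i : ι) :
    {x | i ∈ (cascadeStep E x)^[N] S₀} = cascadeTrajectory E S₀ N ⁻¹'
      ↑(Finset.univ.filter fun T : Fin (N + 1) → Finset ι => i ∈ T (Fin.last N)) := by
  ext x
  simp [cascadeTrajectory]

variable [∀ a, MeasurableSpace (X a)]

theorem measurableSet_setOf_cascadeTrajectory_eq (hE : ∀ a, Monotone (E a))
    (hEm : ∀ a A, MeasurableSet (E a A)) (T : Fin (N + 1) → Finset ι) :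
    MeasurableSet {x | cascadeTrajectory E S₀ N x = T} := by
  by_cases hT : Monotone T ∧ T 0 = S₀
  · rw [setOf_cascadeTrajectory_eq hT.2]
    exact .univ_pi fun a => measurableSet_setOf_chain_pattern
      ((hE a).comp (hT.1.comp Fin.strictMono_castSucc.monotone)) (fun t => hEm a _)
      fun s => ∀ t, a ∈ T t.succ ↔ a ∈ T t.castSucc ∨ s t
  · rw [setOf_cascadeTrajectory_eq_empty hT]
    exact .empty

variable {X' : ι → Type*} [∀ a, MeasurableSpace (X' a)] {E' : ∀ a, Finset ι → Set (X' a)}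
  {ν : ∀ a, Measure (X a)} {ν' : ∀ a, Measure (X' a)}
  [∀ a, IsProbabilityMeasure (ν a)] [∀ a, IsProbabilityMeasure (ν' a)]

theorem measure_setOf_cascadeTrajectory_eq (hE : ∀ a, Monotone (E a))
    (hE' : ∀ a, Monotone (E' a)) (hEm : ∀ a A, MeasurableSet (E a A))
    (hEm' : ∀ a A, MeasurableSet (E' a A)) (h : ∀ a A, ν a (E a A) = ν' a (E' a A))
    (T : Fin (N + 1) → Finset ι) :
    Measure.pi ν {x | cascadeTrajectory E S₀ N x = T} =
      Measure.pi ν' {x | cascadeTrajectory E' S₀ N x = T} := by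
  by_cases hT : Monotone T ∧ T 0 = S₀
  · have hTc : Monotone fun t : Fin N => T t.castSucc :=
      hT.1.comp Fin.strictMono_castSucc.monotone
    rw [setOf_cascadeTrajectory_eq hT.2, setOf_cascadeTrajectory_eq hT.2, Measure.pi_pi,
      Measure.pi_pi]
    exact Finset.prod_congr rfl fun a _ => measure_setOf_chain_pattern_eq
      ((hE a).comp hTc) ((hE' a).comp hTc) (fun t => hEm a _) (fun t => hEm' a _)
      (fun t => h a _) fun s => ∀ t, a ∈ T t.succ ↔ a ∈ T t.castSucc ∨ s t
  · rw [setOf_cascadeTrajectory_eq_empty hT, setOf_cascadeTrajectory_eq_empty hT, measure_empty,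
      measure_empty]

theorem measure_pi_mem_iterate_cascadeStep_eq (hE : ∀ a, Monotone (E a))
    (hE' : ∀ a, Monotone (E' a)) (hEm : ∀ a A, MeasurableSet (E a A))
    (hEm' : ∀ a A, MeasurableSet (E' a A)) (h : ∀ a A, ν a (E a A) = ν' a (E' a A))
    (i : ι) :
    Measure.pi ν {x | i ∈ (cascadeStep E x)^[N] S₀} =
      Measure.pi ν' {x | i ∈ (cascadeStep E' x)^[N] S₀} := by
  rw [setOf_mem_iterate_cascadeStep, setOf_mem_iterate_cascadeStep,
    ← sum_measure_preimage_singleton _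
      fun T _ => measurableSet_setOf_cascadeTrajectory_eq hE hEm T,
    ← sum_measure_preimage_singleton _
      fun T _ => measurableSet_setOf_cascadeTrajectory_eq hE' hEm' T]
  exact Finset.sum_congr rfl fun T _ =>
    measure_setOf_cascadeTrajectory_eq hE hE' hEm hEm' h T

end Cascade

def Protocol.Holds {κ : Type*} : Protocol → (κ → Prop) → Prop
  | .OR, p => ∃ k, p k
  | .AND, p => ∀ k, p k

section Protocol
variable {κ : Type*} {Y Y' : κ → Type*}

theorem Protocol.Holds.mono {P : Protocol} {p q : κ → Prop} (h : ∀ k, p k → q k)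
    (hp : P.Holds p) : P.Holds q := by
  cases P
  exacts [hp.imp h, fun k => h k (hp k)]

theorem setOf_holds_OR (B : ∀ k, Set (Y k)) :
    {y : ∀ k, Y k | Protocol.OR.Holds fun k => y k ∈ B k} = (univ.pi fun k => (B k)ᶜ)ᶜ := by
  ext y
  simp [Protocol.Holds]

theorem setOf_holds_AND (B : ∀ k, Set (Y k)) :
    {y : ∀ k, Y k | Protocol.AND.Holds fun k => y k ∈ B k} = univ.pi B := by
  ext y
  simp [Protocol.Holds]

variable [∀ k, MeasurableSpace (Y k)] [∀ k, MeasurableSpace (Y' k)]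

theorem measurableSet_setOf_holds [Countable κ] (P : Protocol) {B : ∀ k, Set (Y k)}
    (hB : ∀ k, MeasurableSet (B k)) : MeasurableSet {y : ∀ k, Y k | P.Holds fun k => y k ∈ B k} := by
  cases P
  · rw [setOf_holds_OR]
    exact (MeasurableSet.univ_pi fun k => (hB k).compl).compl
  · rw [setOf_holds_AND]
    exact .univ_pi hB

theorem measure_pi_setOf_holds_eq [Fintype κ] (P : Protocol) {ρ : ∀ k, Measure (Y k)}
    {ρ' : ∀ k, Measure (Y' k)} [∀ k, IsProbabilityMeasure (ρ k)] [∀ k, IsProbabilityMeasure (ρ' k)]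
    {B : ∀ k, Set (Y k)} {B' : ∀ k, Set (Y' k)} (hB : ∀ k, MeasurableSet (B k))
    (hB' : ∀ k, MeasurableSet (B' k)) (h : ∀ k, ρ k (B k) = ρ' k (B' k)) :
    Measure.pi ρ {y | P.Holds fun k => y k ∈ B k} =
      Measure.pi ρ' {y | P.Holds fun k => y k ∈ B' k} := by
  cases P
  · rw [setOf_holds_OR, setOf_holds_OR, prob_compl_eq_one_sub (.univ_pi fun k => (hB k).compl),
      prob_compl_eq_one_sub (.univ_pi fun k => (hB' k).compl), Measure.pi_pi, Measure.pi_pi]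
    simp only [prob_compl_eq_one_sub (hB _), prob_compl_eq_one_sub (hB' _), h]
  · rw [setOf_holds_AND, setOf_holds_AND, Measure.pi_pi, Measure.pi_pi]
    simp only [h]

end Protocol

instance : IsProbabilityMeasure (volume.restrict (Icc (0 : ℝ) 1)) :=
  ⟨by simp⟩

theorem volume_restrict_Icc_Iio {c : ℝ} (hc : c ≤ 1) :
    volume.restrict (Icc (0 : ℝ) 1) (Iio c) = ENNReal.ofReal c := by
  have : Iio c ∩ Icc 0 1 = Ico 0 c := by
    ext x; simp only [mem_inter_iff, mem_Iio, mem_Icc, mem_Ico]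
    constructor
    · rintro ⟨hxc, h0, -⟩; exact ⟨h0, hxc⟩
    · rintro ⟨h0, hxc⟩; exact ⟨hxc, h0, hxc.le.trans hc⟩
  rw [Measure.restrict_apply measurableSet_Iio, this, Real.volume_Ico, sub_zero]

noncomputable def weightMeasure {n : ℕ} (p : Fin n → ℝ) : Measure (Fin n) :=
  ∑ j, ENNReal.ofReal (p j) • Measure.dirac j

theorem weightMeasure_apply {n : ℕ} {p : Fin n → ℝ} (hp : ∀ j, 0 ≤ p j) (A : Finset (Fin n)) :
    weightMeasure p A = ENNReal.ofReal (∑ j ∈ A, p j) := by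
  rw [ENNReal.ofReal_sum_of_nonneg fun j _ => hp j]
  simp [weightMeasure, Set.indicator_apply, Finset.sum_ite_mem]

theorem weightMeasure_singleton {n : ℕ} {p : Fin n → ℝ} (hp : ∀ j, 0 ≤ p j) (j : Fin n) :
    weightMeasure p {j} = ENNReal.ofReal (p j) := by
  simpa using weightMeasure_apply hp {j}

theorem isProbabilityMeasure_weightMeasure {n : ℕ} {p : Fin n → ℝ} (hp0 : ∀ j, 0 ≤ p j)
    (hp1 : ∑ j, p j = 1) : IsProbabilityMeasure (weightMeasure p) :=
  ⟨by simpa [hp1] using weightMeasure_apply hp0 Finset.univ⟩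

section Multiplex
variable {n m : ℕ} (w : Fin m → Fin n → Fin n → ℝ) (u : Fin n → Protocol)

def ltmActivationSet (a : Fin n) (A : Finset (Fin n)) : Set (Fin m → ℝ) :=
  {r | (u a).Holds fun k => r k < ∑ j ∈ A, w k a j}

def lemActivationSet (a : Fin n) (A : Finset (Fin n)) : Set (Fin m → Fin n) :=
  {f | (u a).Holds fun k => f k ∈ A}

noncomputable def liveEdgeMeasure : Measure (Fin n → Fin m → Fin n) :=
  Measure.pi fun a => Measure.pi fun k => weightMeasure (w k a)

theorem ltmStep_eq_cascadeStep (μ : Fin n → Fin m → ℝ) :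
    ltmStep w u μ = cascadeStep (ltmActivationSet w u) μ := by
  funext A
  ext a
  rw [mem_cascadeStep]
  cases h : u a <;> simp [ltmStep, ltmActivationSet, Protocol.Holds, h]

theorem uReachable_iff (S₀ : Finset (Fin n)) (σ : Fin n → Fin m → Fin n) (i : Fin n) :
    UReachable S₀ u σ i ↔ i ∈ (cascadeStep (lemActivationSet u) σ)^[n] S₀ := by
  have hstep : lemStep S₀ u σ = fun A => S₀ ⊔ cascadeStep (lemActivationSet u) σ A := by
    funext A
    ext a
    rw [Finset.sup_eq_union, Finset.mem_union, mem_cascadeStep]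
    cases h : u a <;> simp [lemStep, lemActivationSet, Protocol.Holds, h]
  rw [UReachable, hstep, iterate_sup_left_eq fun A a ha => mem_cascadeStep.2 (.inl ha)]

variable {w}

theorem monotone_ltmActivationSet (hw0 : ∀ k i j, 0 ≤ w k i j) (a : Fin n) :
    Monotone (ltmActivationSet w u a) := fun _ _ hAB _ hr =>
  hr.mono fun k hk => hk.trans_le <|
    Finset.sum_le_sum_of_subset_of_nonneg hAB fun j _ _ => hw0 k a j

theorem measurableSet_ltmActivationSet (a : Fin n) (A : Finset (Fin n)) :
    MeasurableSet (ltmActivationSet w u a A) :=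
  measurableSet_setOf_holds (u a) (B := fun k => Iio (∑ j ∈ A, w k a j))
    fun _ => measurableSet_Iio

theorem monotone_lemActivationSet (a : Fin n) : Monotone (lemActivationSet (m := m) u a) :=
  fun _ _ hAB _ hf => hf.mono fun _ hk => hAB hk

theorem measure_ltmActivationSet (hw0 : ∀ k i j, 0 ≤ w k i j)
    (hw1 : ∀ k i, ∑ j : Fin n, w k i j = 1) (a : Fin n) (A : Finset (Fin n)) :
    Measure.pi (fun _ => volume.restrict (Icc (0 : ℝ) 1)) (ltmActivationSet w u a A) =
      Measure.pi (fun k => weightMeasure (w k a)) (lemActivationSet u a A) := by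
  have := fun k => isProbabilityMeasure_weightMeasure (hw0 k a) (hw1 k a)
  refine measure_pi_setOf_holds_eq (u a) (B := fun k => Iio (∑ j ∈ A, w k a j))
    (fun k => measurableSet_Iio) (fun k => .of_discrete) fun k => ?_
  rw [volume_restrict_Icc_Iio, weightMeasure_apply (hw0 k a)]
  calc ∑ j ∈ A, w k a j ≤ ∑ j, w k a j :=
        Finset.sum_le_sum_of_subset_of_nonneg A.subset_univ fun j _ _ => hw0 k a j
    _ = 1 := hw1 k a

theorem rProb_eq_liveEdgeMeasure (hw0 : ∀ k i j, 0 ≤ w k i j)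
    (hw1 : ∀ k i, ∑ j : Fin n, w k i j = 1) (S₀ : Finset (Fin n)) (i : Fin n) :
    rProb w S₀ u i = (liveEdgeMeasure w {σ | UReachable S₀ u σ i}).toReal := by
  classical
  have := fun k a => isProbabilityMeasure_weightMeasure (hw0 k a) (hw1 k a)
  rw [rProb, liveEdgeMeasure, ← Finset.coe_filter_univ, ← sum_measure_singleton,
    ENNReal.toReal_sum fun σ _ => measure_ne_top _ _, Finset.sum_filter]
  refine Finset.sum_congr rfl fun σ _ => ?_
  split_ifs
  · simp only [Measure.pi_singleton, ENNReal.toReal_prod, weightMeasure_singleton (hw0 _ _),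
      ENNReal.toReal_ofReal (hw0 _ _ _)]
  · rfl

end Multiplex

/-- equivalence of the multiplex LTM and the multiplex LEM:
the probability (over uniformly distributed thresholds) that agent `i` is active
at steady state equals the probability (over live-edge selections drawn from the
product PMF given by the weights) that `i` is `U`-reachable from `S₀`. -/
theorem ltm_lem_equivalence {n m : ℕ} (w : Fin m → Fin n → Fin n → ℝ)
    (hw0 : ∀ k i j, 0 ≤ w k i j) (hw1 : ∀ k i, ∑ j : Fin n, w k i j = 1)
    (u : Fin n → Protocol) (S₀ : Finset (Fin n)) (i : Fin n) :
    pLTM w u S₀ i = rProb w S₀ u i := by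
  have := fun k a => isProbabilityMeasure_weightMeasure (hw0 k a) (hw1 k a)
  rw [rProb_eq_liveEdgeMeasure u hw0 hw1, pLTM, thMeasure, liveEdgeMeasure]
  simp only [ltmSS, ltmStep_eq_cascadeStep, uReachable_iff]
  congr 1
  exact measure_pi_mem_iterate_cascadeStep_eq (monotone_ltmActivationSet u hw0)
    (monotone_lemActivationSet u) (measurableSet_ltmActivationSet u)
    (fun _ _ => .of_discrete) (measure_ltmActivationSet u hw0 hw1) i
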